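/- arXiv:2007.11083 — 8 statements merged into one kernel-verified Lean document; each statement's English description precedes it below -/
import Mathlib

section
/- Let P ∈ M_N(ℂ) be a nonzero orthogonal projection, let E_1,…,E_n ∈ M_N(ℂ), let η_1,…,η_n ∈ {+1,−1} and let η = diag(η_1,…,η_n) ∈ M_n(ℂ). Suppose C ∈ M_n(ℂ) is pseudohermitian with respect to η (i.e. C† = η C η) and satisfies the pseudohermitian form of the quantum error correcting conditions η_i · P E_i† E_j P = C_{ij} P for all i, j. Assume moreover that the matrix η C is positive definite. Then there exist a matrix u ∈ M_n(ℂ) that is pseudounitary with respect to η (i.e. u† η u = η) and real numbers d_1,…,d_n such that the operators F_j = Σ_k E_k u_{kj} satisfy the diagonalized quantum error correcting conditions P F_i† F_j P = δ_{ij} d_i P for all i, j. -/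
open Matrix ComplexOrder

/-!
Multiplying the QEC conditions by `η_k` gives `P E_kᴴ E_l P = M_kl P` with `M = ηC` positive
definite, hence `P F_iᴴ F_j P = (uᴴ M u)_ij P`; so it suffices to find a pseudounitary `u` with
`uᴴ M u` diagonal. Simultaneously diagonalize `M` and `η`: some `v` has `vᴴ M v = 1` and
`vᴴ η v = diag g`. By Sylvester's law of inertia `g` has as many positive entries as `η`, and
none of them vanishes, so a permutation of the columns followed by the rescaling
`t_i = |g_{σ i}|^{-1/2}` turns `diag g` into `η` while keeping `uᴴ M u` diagonal.
-/

lemma Equiv.Perm.exists_forall_apply_iff_of_card_eq {α : Type*} [Fintype α] {p q : α → Prop}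
    [DecidablePred p] [DecidablePred q] (h : Fintype.card {a // p a} = Fintype.card {a // q a}) :
    ∃ σ : Equiv.Perm α, ∀ a, p (σ a) ↔ q a := by
  have hc : Fintype.card {a // ¬q a} = Fintype.card {a // ¬p a} := by
    rw [Fintype.card_subtype_compl, Fintype.card_subtype_compl, h]
  refine ⟨Equiv.subtypeCongr (Fintype.equivOfCardEq h.symm) (Fintype.equivOfCardEq hc),
    fun a => ?_⟩
  by_cases ha : q a
  · simpa [Equiv.subtypeCongr, ha] using (Fintype.equivOfCardEq h.symm ⟨a, ha⟩).2
  · simpa [Equiv.subtypeCongr, ha] using (Fintype.equivOfCardEq hc ⟨a, ha⟩).2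

theorem Module.finrank_le_finrank_ker_funLeft_comp_add_card {K E ι : Type*} [Field K]
    [AddCommGroup E] [Module K E] [FiniteDimensional K E] (f : E →ₗ[K] ι → K)
    (p : ι → Prop) [Fintype {i // p i}] :
    finrank K E ≤
      finrank K (LinearMap.ker (LinearMap.funLeft K K (Subtype.val : {i // p i} → ι) ∘ₗ f)) +
        Fintype.card {i // p i} := by
  have hrange :=
    (LinearMap.range (LinearMap.funLeft K K (Subtype.val : {i // p i} → ι) ∘ₗ f)).finrank_le
  rw [Module.finrank_fintype_fun_eq_card] at hrange
  have := LinearMap.finrank_range_add_finrank_ker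
    (LinearMap.funLeft K K (Subtype.val : {i // p i} → ι) ∘ₗ f)
  omega

namespace Matrix

variable {ι : Type*} [Fintype ι] [DecidableEq ι]

lemma star_dotProduct_diagonal_mulVec (g : ι → ℝ) (x : ι → ℂ) :
    star x ⬝ᵥ diagonal (fun i => (g i : ℂ)) *ᵥ x = ((∑ i, g i * Complex.normSq (x i) : ℝ) : ℂ) := by
  simp only [dotProduct, mulVec_diagonal, Complex.normSq_eq_conj_mul_self, Complex.ofReal_sum,
    Complex.ofReal_mul, Pi.star_apply, RCLike.star_def]
  exact Finset.sum_congr rfl fun i _ => by ring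

lemma sum_mul_normSq_mulVec_eq_of_conjTranspose_mul_diagonal_mul_eq {U : Matrix ι ι ℂ}
    {g g' : ι → ℝ} (h : Uᴴ * diagonal (fun i => (g i : ℂ)) * U = diagonal (fun i => (g' i : ℂ)))
    (x : ι → ℂ) :
    ∑ i, g i * Complex.normSq ((U *ᵥ x) i) = ∑ i, g' i * Complex.normSq (x i) := by
  have hform := congrArg (fun A => star x ⬝ᵥ A *ᵥ x) h
  simp only [← mulVec_mulVec, dotProduct_mulVec, ← star_mulVec] at hform
  simp only [← dotProduct_mulVec, star_dotProduct_diagonal_mulVec] at hform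
  exact_mod_cast hform

lemma card_pos_le_of_conjTranspose_mul_diagonal_mul_eq (U : Matrix ι ι ℂ) {g g' : ι → ℝ}
    (h : Uᴴ * diagonal (fun i => (g i : ℂ)) * U = diagonal (fun i => (g' i : ℂ))) :
    Fintype.card {i // 0 < g' i} ≤ Fintype.card {i // 0 < g i} := by
  have hV := Module.finrank_le_finrank_ker_funLeft_comp_add_card
    (LinearMap.id : (ι → ℂ) →ₗ[ℂ] ι → ℂ) (fun i => ¬0 < g' i)
  have hW := Module.finrank_le_finrank_ker_funLeft_comp_add_card U.mulVecLin (fun i => 0 < g i)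
  set V := LinearMap.ker
    (LinearMap.funLeft ℂ ℂ (Subtype.val : {i // ¬0 < g' i} → ι) ∘ₗ LinearMap.id)
  set W := LinearMap.ker
    (LinearMap.funLeft ℂ ℂ (Subtype.val : {i // 0 < g i} → ι) ∘ₗ U.mulVecLin)
  -- on `V` the form is positive definite, on `W` it is negative semidefinite
  have hdisj : Disjoint V W := by
    refine Submodule.disjoint_def.mpr fun x hxV hxW => ?_
    have hx : ∀ i, ¬0 < g' i → x i = 0 := fun i hi => congrFun hxV ⟨i, hi⟩
    have hUx : ∀ i, 0 < g i → (U *ᵥ x) i = 0 := fun i hi => congrFun hxW ⟨i, hi⟩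
    have hnonneg : ∀ i, 0 ≤ g' i * Complex.normSq (x i) := fun i => by
      by_cases hi : 0 < g' i
      · exact mul_nonneg hi.le (Complex.normSq_nonneg _)
      · simp [hx i hi]
    have hnonpos : ∑ i, g' i * Complex.normSq (x i) ≤ 0 := by
      rw [← sum_mul_normSq_mulVec_eq_of_conjTranspose_mul_diagonal_mul_eq h]
      refine Finset.sum_nonpos fun i _ => ?_
      by_cases hi : 0 < g i
      · simp [hUx i hi]
      · exact mul_nonpos_of_nonpos_of_nonneg (not_lt.mp hi) (Complex.normSq_nonneg _)
    have hzero := (Finset.sum_eq_zero_iff_of_nonneg fun i _ => hnonneg i).mp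
      (le_antisymm hnonpos (Finset.sum_nonneg fun i _ => hnonneg i))
    funext i
    by_cases hi : 0 < g' i
    · simpa [hi.ne'] using hzero i (Finset.mem_univ i)
    · exact hx i hi
  have hVW := Submodule.finrank_add_finrank_le_of_disjoint hdisj
  have hcompl := Fintype.card_subtype_compl (fun i => 0 < g' i)
  have hcard := Fintype.card_subtype_le (fun i => 0 < g' i)
  simp only [Module.finrank_fintype_fun_eq_card] at hV hW hVW
  omega

/-- **Sylvester's law of inertia** -/
theorem card_pos_eq_of_conjTranspose_mul_diagonal_mul_eq {U : Matrix ι ι ℂ} (hU : IsUnit U)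
    {g g' : ι → ℝ}
    (h : Uᴴ * diagonal (fun i => (g i : ℂ)) * U = diagonal (fun i => (g' i : ℂ))) :
    Fintype.card {i // 0 < g' i} = Fintype.card {i // 0 < g i} := by
  refine le_antisymm (card_pos_le_of_conjTranspose_mul_diagonal_mul_eq U h)
    (card_pos_le_of_conjTranspose_mul_diagonal_mul_eq U⁻¹ ?_)
  have := hU.invertible
  rw [← h, ← Matrix.mul_assoc, ← Matrix.mul_assoc, ← conjTranspose_mul, mul_inv_of_invertible,
    conjTranspose_one, Matrix.one_mul, Matrix.mul_assoc, mul_inv_of_invertible, Matrix.mul_one]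

open scoped MatrixOrder in
lemma PosDef.exists_conjTranspose_mul_mul_eq_one_and_diagonal {M H : Matrix ι ι ℂ}
    (hM : M.PosDef) (hH : H.IsHermitian) :
    ∃ (v : Matrix ι ι ℂ) (g : ι → ℝ),
      vᴴ * M * v = 1 ∧ vᴴ * H * v = diagonal (fun i => (g i : ℂ)) := by
  obtain ⟨y, hy, rfl⟩ :=
    CStarAlgebra.isStrictlyPositive_iff_eq_star_mul_self.mp hM.isStrictlyPositive
  have := hy.invertible
  have hX : (y⁻¹ᴴ * H * y⁻¹).IsHermitian := isHermitian_conjTranspose_mul_mul _ hH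
  set W := (hX.eigenvectorUnitary : Matrix ι ι ℂ)
  refine ⟨y⁻¹ * W, hX.eigenvalues, ?_, ?_⟩
  · rw [star_eq_conjTranspose, conjTranspose_mul]
    calc Wᴴ * y⁻¹ᴴ * (yᴴ * y) * (y⁻¹ * W) = Wᴴ * (y * y⁻¹)ᴴ * (y * y⁻¹) * W := by
          simp only [conjTranspose_mul, Matrix.mul_assoc]
      _ = 1 := by
          rw [mul_inv_of_invertible, conjTranspose_one, Matrix.mul_one, Matrix.mul_one,
            ← star_eq_conjTranspose, Unitary.coe_star_mul_self]
  · have hdiag := hX.conjStarAlgAut_star_eigenvectorUnitary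
    rw [Unitary.conjStarAlgAut_apply, Unitary.coe_star, star_star] at hdiag
    rw [conjTranspose_mul, ← star_eq_conjTranspose W]
    exact (by simp only [W, Matrix.mul_assoc] : _ = _).trans hdiag

lemma conjTranspose_permMatrix_mul_diagonal_mul_diagonal_mul {σ : Equiv.Perm ι}
    (t : ι → ℝ) (g : ι → ℂ) :
    (σ⁻¹.permMatrix ℂ * diagonal (fun i => (t i : ℂ)))ᴴ * diagonal g *
        (σ⁻¹.permMatrix ℂ * diagonal (fun i => (t i : ℂ))) =
      diagonal (fun i => (t i : ℂ) ^ 2 * g (σ i)) := by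
  have hperm : (σ⁻¹.permMatrix ℂ)ᴴ * diagonal g * σ⁻¹.permMatrix ℂ = diagonal (g ∘ σ) := by
    rw [conjTranspose_permMatrix, inv_inv, PEquiv.toMatrix_toPEquiv_mul,
      PEquiv.mul_toMatrix_toPEquiv, submatrix_submatrix]
    exact submatrix_diagonal_equiv g σ
  rw [conjTranspose_mul, diagonal_conjTranspose]
  calc _ = diagonal (star fun i => (t i : ℂ)) * ((σ⁻¹.permMatrix ℂ)ᴴ * diagonal g *
        σ⁻¹.permMatrix ℂ) * diagonal (fun i => (t i : ℂ)) := by simp only [Matrix.mul_assoc]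
    _ = _ := by
      rw [hperm, diagonal_mul_diagonal, diagonal_mul_diagonal]
      congr 1
      funext i
      simp only [Pi.star_apply, RCLike.star_def, Complex.conj_ofReal, Function.comp_apply]
      ring

lemma exists_conjTranspose_mul_diagonal_mul_eq_diagonal {g s : ι → ℝ} (hg : ∀ i, g i ≠ 0)
    (hs : ∀ i, s i = 1 ∨ s i = -1)
    (hcard : Fintype.card {i // 0 < g i} = Fintype.card {i // 0 < s i}) :
    ∃ (Q : Matrix ι ι ℂ) (d : ι → ℝ),
      Qᴴ * diagonal (fun i => (g i : ℂ)) * Q = diagonal (fun i => (s i : ℂ)) ∧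
        Qᴴ * Q = diagonal (fun i => (d i : ℂ)) := by
  obtain ⟨σ, hσ⟩ := Equiv.Perm.exists_forall_apply_iff_of_card_eq hcard
  set t : ι → ℝ := fun i => (√|g (σ i)|)⁻¹
  have hscale : ∀ i, t i ^ 2 * g (σ i) = s i := fun i => by
    have ht : t i ^ 2 = |g (σ i)|⁻¹ := by
      simp only [t, inv_pow, Real.sq_sqrt (abs_nonneg _)]
    rw [ht]
    rcases hs i with hsi | hsi
    · rw [abs_of_pos ((hσ i).mpr (hsi ▸ one_pos)), inv_mul_cancel₀ (hg _), hsi]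
    · have hneg : g (σ i) < 0 :=
        lt_of_le_of_ne (not_lt.mp fun h => by linarith [(hσ i).mp h]) (hg _)
      rw [abs_of_neg hneg, inv_neg, neg_mul, inv_mul_cancel₀ (hg _), hsi]
  refine ⟨σ⁻¹.permMatrix ℂ * diagonal (fun i => (t i : ℂ)), fun i => t i ^ 2, ?_, ?_⟩
  · rw [conjTranspose_permMatrix_mul_diagonal_mul_diagonal_mul]
    congr 1
    funext i
    exact_mod_cast hscale i
  · simpa using conjTranspose_permMatrix_mul_diagonal_mul_diagonal_mul (σ := σ) t 1

theorem PosDef.exists_conjTranspose_mul_diagonal_mul_eq_and_diagonal {M : Matrix ι ι ℂ}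
    (hM : M.PosDef) {s : ι → ℝ} (hs : ∀ i, s i = 1 ∨ s i = -1) :
    ∃ (u : Matrix ι ι ℂ) (d : ι → ℝ),
      uᴴ * diagonal (fun i => (s i : ℂ)) * u = diagonal (fun i => (s i : ℂ)) ∧
        uᴴ * M * u = diagonal (fun i => (d i : ℂ)) := by
  set S := diagonal (fun i => (s i : ℂ))
  have hS : S * S = 1 := by
    rw [diagonal_mul_diagonal, ← diagonal_one]
    congr 1
    funext i
    rcases hs i with h | h <;> simp [h]
  obtain ⟨v, g, hvM, hvS⟩ := hM.exists_conjTranspose_mul_mul_eq_one_and_diagonal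
    (isHermitian_diagonal_iff.mpr fun i => Complex.conj_ofReal (s i))
  have hv : IsUnit v := (isUnit_iff_isUnit_det v).mpr (isUnit_det_of_left_inverse hvM)
  have hg : ∀ i, g i ≠ 0 := by
    have hSunit : IsUnit S := (isUnit_iff_isUnit_det S).mpr (isUnit_det_of_left_inverse hS)
    have hunit : IsUnit (vᴴ * S * v) := (((isUnit_conjTranspose v).mpr hv).mul hSunit).mul hv
    rw [hvS, isUnit_diagonal, Pi.isUnit_iff] at hunit
    exact fun i => Complex.ofReal_ne_zero.mp (hunit i).ne_zero
  obtain ⟨Q, d, hQS, hQQ⟩ := exists_conjTranspose_mul_diagonal_mul_eq_diagonal hg hs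
    (card_pos_eq_of_conjTranspose_mul_diagonal_mul_eq hv hvS)
  have hconj : ∀ A : Matrix ι ι ℂ, (v * Q)ᴴ * A * (v * Q) = Qᴴ * (vᴴ * A * v) * Q := fun A => by
    simp only [conjTranspose_mul, Matrix.mul_assoc]
  exact ⟨v * Q, d, by rw [hconj, hvS, hQS], by rw [hconj, hvM, Matrix.mul_one, hQQ]⟩

end Matrix

lemma Matrix.mul_conjTranspose_sum_smul_mul_sum_smul_mul {R m ι κ : Type*} [CommRing R]
    [StarRing R] [Fintype m] [Fintype ι] {P : Matrix m m R} {E : ι → Matrix m m R}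
    {G : Matrix ι ι R} (hG : ∀ k l, P * (E k)ᴴ * E l * P = G k l • P) (u : Matrix ι κ R)
    (i j : κ) :
    P * (∑ k, u k i • E k)ᴴ * (∑ k, u k j • E k) * P = (uᴴ * G * u) i j • P := by
  simp only [conjTranspose_sum, conjTranspose_smul, Matrix.mul_sum,
    Matrix.smul_mul, Matrix.mul_smul, smul_smul, hG, Matrix.mul_apply, conjTranspose_apply,
    Finset.sum_smul, Finset.sum_mul]
  rw [Finset.sum_comm]
  exact Finset.sum_congr rfl fun l _ => Finset.sum_congr rfl fun k _ => by
    congr 1; ring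

theorem stmt_0_general {N n : ℕ} (P : Matrix (Fin N) (Fin N) ℂ)
    (E : Fin n → Matrix (Fin N) (Fin N) ℂ)
    (η : Fin n → ℝ) (hη : ∀ i, η i = 1 ∨ η i = -1)
    (C : Matrix (Fin n) (Fin n) ℂ)
    (hQEC : ∀ i j, (η i : ℂ) • (P * (E i)ᴴ * E j * P) = C i j • P)
    (hpos : (Matrix.diagonal (fun i => (η i : ℂ)) * C).PosDef) :
    ∃ (u : Matrix (Fin n) (Fin n) ℂ) (d : Fin n → ℝ),
      uᴴ * Matrix.diagonal (fun i => (η i : ℂ)) * u =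
        Matrix.diagonal (fun i => (η i : ℂ)) ∧
      ∀ i j, P * (∑ k, u k i • E k)ᴴ * (∑ k, u k j • E k) * P =
        (if i = j then (d i : ℂ) else 0) • P := by
  have hQEC' : ∀ k l, P * (E k)ᴴ * E l * P = (diagonal (fun i => (η i : ℂ)) * C) k l • P := by
    intro k l
    have hsq : (η k : ℂ) * η k = 1 := by rcases hη k with h | h <;> simp [h]
    rw [diagonal_mul, ← smul_smul, ← hQEC, smul_smul, hsq, one_smul]
  obtain ⟨u, d, hu, hud⟩ := hpos.exists_conjTranspose_mul_diagonal_mul_eq_and_diagonal hη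
  refine ⟨u, d, hu, fun i j => ?_⟩
  rw [mul_conjTranspose_sum_smul_mul_sum_smul_mul hQEC', hud, diagonal_apply]

/-- **Lemma 1 (diagonalization of the pseudohermitian QEC conditions).**
Given a nonzero orthogonal projection `P`, operators `E i`, signs `η i ∈ {±1}`,
and a matrix `C` pseudohermitian w.r.t. `η` satisfying the pseudohermitian form of
the QEC conditions `η i • P (E i)ᴴ (E j) P = C i j • P`, with `η C` positive definite,
there is a pseudounitary `u` such that the operators `F j = ∑ k, u k j • E k`
satisfy the diagonalized QEC conditions `P (F i)ᴴ (F j) P = δᵢⱼ dᵢ P`. -/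
theorem stmt_0 {N n : ℕ} (P : Matrix (Fin N) (Fin N) ℂ)
    (hP : P ≠ 0) (hProj : P * P = P) (hPH : Pᴴ = P)
    (E : Fin n → Matrix (Fin N) (Fin N) ℂ)
    (η : Fin n → ℝ) (hη : ∀ i, η i = 1 ∨ η i = -1)
    (C : Matrix (Fin n) (Fin n) ℂ)
    (hCpseudoherm : Cᴴ = Matrix.diagonal (fun i => (η i : ℂ)) * C *
      Matrix.diagonal (fun i => (η i : ℂ)))
    (hQEC : ∀ i j, (η i : ℂ) • (P * (E i)ᴴ * E j * P) = C i j • P)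
    (hpos : (Matrix.diagonal (fun i => (η i : ℂ)) * C).PosDef) :
    ∃ (u : Matrix (Fin n) (Fin n) ℂ) (d : Fin n → ℝ),
      uᴴ * Matrix.diagonal (fun i => (η i : ℂ)) * u =
        Matrix.diagonal (fun i => (η i : ℂ)) ∧
      ∀ i j, P * (∑ k, u k i • E k)ᴴ * (∑ k, u k j • E k) * P =
        (if i = j then (d i : ℂ) else 0) • P :=
  stmt_0_general P E η hη C hQEC hpos
end

section
/- Let P ∈ M_N(ℂ) be a nonzero orthogonal projection, let F_1,…,F_n ∈ M_N(ℂ), let η_1,…,η_n ∈ {+1,−1}, and let d_1,…,d_n ∈ ℝ satisfy the diagonalized quantum error correcting conditions P F_i† F_j P = δ_{ij} d_i P for all i, j. Let ρ ∈ M_N(ℂ) be positive semidefinite. If the negative part of the evolution is nonzero on the encoded state, i.e. Σ_{i : η_i = −1} F_i (P ρ P) F_i† ≠ 0, then the output matrix Σ_{i=1}^n η_i · F_i (P ρ P) F_i† is not positive semidefinite; that is, there exists a vector v ∈ ℂ^N with v† (Σ_i η_i F_i (PρP) F_i†) v < 0. -/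
/-!
Put `G i = F i P`, so that the QEC conditions read `G iᴴ G j = δᵢⱼ dᵢ P` and the output is
`M = ∑ ηᵢ Gᵢ ρ Gᵢᴴ`. Conjugating `M` by `G k` kills every term but the `k`-th, leaving
`G kᴴ M G k = η_k d_k² · PρP`. Choose `k` with `η_k = -1` and `G k ρ G kᴴ ≠ 0`; then `d_k ≠ 0`
(otherwise `G kᴴ G k = 0`, so `G k = 0`) and `PρP ≠ 0`, so some `x` has `x† PρP x > 0`, and
`v = G k x` gives `v† M v = -d_k² · x† PρP x < 0`.
-/

open Matrix ComplexOrder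

namespace Matrix

variable {m ι R 𝕜 : Type*} [Fintype m]

lemma star_mulVec_dotProduct_mulVec_mulVec [CommSemiring R] [StarRing R]
    (C A : Matrix m m R) (x : m → R) :
    star (C *ᵥ x) ⬝ᵥ A *ᵥ (C *ᵥ x) = star x ⬝ᵥ (Cᴴ * A * C) *ᵥ x := by
  simp only [star_mulVec, dotProduct_mulVec, vecMul_vecMul, Matrix.mul_assoc, mulVec_mulVec]

lemma PosSemidef.exists_dotProduct_mulVec_pos [RCLike 𝕜] {A : Matrix m m 𝕜}
    (hA : A.PosSemidef) (h : A ≠ 0) : ∃ x, 0 < star x ⬝ᵥ A *ᵥ x := by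
  obtain ⟨x, hx⟩ : ∃ x, A *ᵥ x ≠ 0 := by
    by_contra! hzero
    exact h (ext_iff_mulVec.mpr fun v => by rw [hzero v, zero_mulVec])
  exact ⟨x, (hA.dotProduct_mulVec_nonneg x).lt_of_ne'
    fun h0 => hx ((hA.dotProduct_mulVec_zero_iff x).mp h0)⟩

variable [Fintype ι] [DecidableEq ι]

lemma conjTranspose_mul_sum_mul_of_orthogonal [CommSemiring R] [StarRing R]
    {P ρ : Matrix m m R} {G : ι → Matrix m m R} {d : ι → R}
    (hG : ∀ i j, (G i)ᴴ * G j = (if i = j then d i else 0) • P) (c : ι → R) (k : ι) :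
    (G k)ᴴ * (∑ i, c i • (G i * ρ * (G i)ᴴ)) * G k = (c k * d k ^ 2) • (P * ρ * P) := by
  have hterm : ∀ i, (G k)ᴴ * (c i • (G i * ρ * (G i)ᴴ)) * G k
      = c i • (((G k)ᴴ * G i) * ρ * ((G i)ᴴ * G k)) := fun i => by
    simp only [mul_smul_comm, smul_mul_assoc, Matrix.mul_assoc]
  rw [Finset.mul_sum, Finset.sum_mul, Finset.sum_eq_single k]
  · rw [hterm, hG, if_pos rfl, smul_mul_assoc, mul_smul_comm, smul_mul_assoc, smul_smul,
      smul_smul, sq, mul_assoc, Matrix.mul_assoc]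
  · intro i _ hik
    rw [hterm, hG, if_neg (Ne.symm hik), zero_smul, Matrix.zero_mul, Matrix.zero_mul, smul_zero]
  · exact fun hk => absurd (Finset.mem_univ k) hk

end Matrix

theorem stmt_1_general {N n : ℕ} (P : Matrix (Fin N) (Fin N) ℂ)
    (hPH : Pᴴ = P)
    (F : Fin n → Matrix (Fin N) (Fin N) ℂ)
    (η : Fin n → ℝ)
    (d : Fin n → ℝ)
    (hQEC : ∀ i j, P * (F i)ᴴ * F j * P = (if i = j then (d i : ℂ) else 0) • P)
    (ρ : Matrix (Fin N) (Fin N) ℂ) (hρ : ρ.PosSemidef)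
    (hneg : ∑ i ∈ Finset.univ.filter (fun i => η i = -1),
      F i * (P * ρ * P) * (F i)ᴴ ≠ 0) :
    ∃ v : Fin N → ℂ,
      star v ⬝ᵥ (∑ i, (η i : ℂ) • (F i * (P * ρ * P) * (F i)ᴴ)).mulVec v < 0 := by
  set G : Fin n → Matrix (Fin N) (Fin N) ℂ := fun i => F i * P
  have hG : ∀ i j, (G i)ᴴ * G j = (if i = j then (d i : ℂ) else 0) • P := fun i j => by
    rw [← hQEC]
    simp only [G, conjTranspose_mul, hPH, Matrix.mul_assoc]
  have hGρ : ∀ i, F i * (P * ρ * P) * (F i)ᴴ = G i * ρ * (G i)ᴴ := fun i => by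
    simp only [G, conjTranspose_mul, hPH, Matrix.mul_assoc]
  obtain ⟨k, hk, hk0⟩ := Finset.exists_ne_zero_of_sum_ne_zero hneg
  have hηk : η k = -1 := (Finset.mem_filter.mp hk).2
  have hdk : d k ≠ 0 := by
    rintro hd
    have hGk : G k = 0 := conjTranspose_mul_self_eq_zero.mp (by simp [hG, hd])
    exact hk0 (by rw [hGρ, hGk, Matrix.zero_mul, Matrix.zero_mul])
  have hσ : (P * ρ * P).PosSemidef := by
    simpa only [hPH] using hρ.conjTranspose_mul_mul_same P
  obtain ⟨x, hx⟩ := hσ.exists_dotProduct_mulVec_pos fun h0 => hk0 (by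
    rw [h0, Matrix.mul_zero, Matrix.zero_mul])
  refine ⟨G k *ᵥ x, ?_⟩
  simp_rw [hGρ]
  rw [star_mulVec_dotProduct_mulVec_mulVec, conjTranspose_mul_sum_mul_of_orthogonal (d := fun i => (d i : ℂ)) hG,
    smul_mulVec, dotProduct_smul, smul_eq_mul, hηk]
  have hd2 : (0 : ℂ) < (d k : ℂ) ^ 2 := by exact_mod_cast sq_pos_of_ne_zero hdk
  push_cast
  rw [neg_one_mul, neg_mul, neg_lt_zero]
  exact mul_pos hd2 hx

/-- **Theorem 1.** If the diagonalized QEC conditions hold for operators `F i` with signs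
`η i ∈ {±1}`, `ρ` is positive semidefinite, and the negative part of the evolution is nonzero
on the encoded state `P ρ P`, then the output `∑ i, η i • F i (P ρ P) (F i)ᴴ` is not positive
semidefinite: some vector `v` gives a negative expectation value `v† M v < 0`. -/
theorem stmt_1 {N n : ℕ} (P : Matrix (Fin N) (Fin N) ℂ)
    (hP : P ≠ 0) (hProj : P * P = P) (hPH : Pᴴ = P)
    (F : Fin n → Matrix (Fin N) (Fin N) ℂ)
    (η : Fin n → ℝ) (hη : ∀ i, η i = 1 ∨ η i = -1)
    (d : Fin n → ℝ)
    (hQEC : ∀ i j, P * (F i)ᴴ * F j * P = (if i = j then (d i : ℂ) else 0) • P)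
    (ρ : Matrix (Fin N) (Fin N) ℂ) (hρ : ρ.PosSemidef)
    (hneg : ∑ i ∈ Finset.univ.filter (fun i => η i = -1),
      F i * (P * ρ * P) * (F i)ᴴ ≠ 0) :
    ∃ v : Fin N → ℂ,
      star v ⬝ᵥ (∑ i, (η i : ℂ) • (F i * (P * ρ * P) * (F i)ᴴ)).mulVec v < 0 :=
  stmt_1_general P hPH F η d hQEC ρ hρ hneg
end

section
/- Let P ∈ M_N(ℂ) be a nonzero orthogonal projection, let F_1,…,F_n ∈ M_N(ℂ) be unitary matrices satisfying P F_j† F_i P = δ_{ji} P for all i, j, let η_1,…,η_n ∈ {+1,−1} with η_l = −1 for at least one index l, and let ρ ∈ M_N(ℂ) be positive semidefinite with P ρ P ≠ 0. Then the output matrix Σ_{i=1}^n η_i · F_i (P ρ P) F_i† is not positive semidefinite; that is, there exists a vector v ∈ ℂ^N with v† (Σ_i η_i F_i (PρP) F_i†) v < 0. -/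
/-!
Pick `u` with `u† (PρP) u > 0`, possible because `PρP` is positive semidefinite and nonzero, and
test the output on `v = F_l P u` for a sign `η_l = -1`. The condition `P F_j† F_i P = δ_{ji} P` makes
the compression `(F_l P)† M (F_l P)` collapse to its `l`-th term `η_l PρP`, so
`v† M v = -u† (PρP) u < 0`.
-/

open Matrix ComplexOrder

theorem Matrix.PosSemidef.exists_dotProduct_mulVec_pos_s2 {n 𝕜 : Type*} [Fintype n] [RCLike 𝕜]
    {A : Matrix n n 𝕜} (hA : A.PosSemidef) (hA0 : A ≠ 0) :
    ∃ x : n → 𝕜, 0 < star x ⬝ᵥ A *ᵥ x := by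
  classical
  by_contra! hle
  refine hA0 (Matrix.ext_of_mulVec_single fun j => ?_)
  rw [zero_mulVec, ← hA.dotProduct_mulVec_zero_iff]
  exact ((hA.dotProduct_mulVec_nonneg _).eq_of_not_lt (hle _)).symm

theorem Matrix.star_mulVec_dotProduct_mulVec_mulVec_s2 {m n α : Type*} [Fintype m] [Fintype n]
    [CommSemiring α] [StarRing α] (A : Matrix m m α) (B : Matrix m n α) (w : n → α) :
    star (B *ᵥ w) ⬝ᵥ A *ᵥ (B *ᵥ w) = star w ⬝ᵥ (Bᴴ * A * B) *ᵥ w := by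
  simp only [star_mulVec, dotProduct_mulVec, vecMul_vecMul, Matrix.mul_assoc]

theorem star_mul_sum_smul_conj_mul_eq_smul {ι R A : Type*} [Fintype ι] [DecidableEq ι]
    [CommSemiring R] [Semiring A] [StarRing A] [Module R A] [IsScalarTower R A A]
    [SMulCommClass R A A] {P : A} (hP : star P = P) {F : ι → A}
    (hF : ∀ i j, P * star (F j) * F i * P = if j = i then P else 0)
    (c : ι → R) (X : A) (l : ι) :
    star (F l * P) * (∑ i, c i • (F i * (P * X * P) * star (F i))) * (F l * P)
      = c l • (P * X * P) := by
  have hterm : ∀ i, star (F l * P) * (c i • (F i * (P * X * P) * star (F i))) * (F l * P)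
      = c i • ((P * star (F l) * F i * P) * X * (P * star (F i) * F l * P)) := by
    intro i
    simp only [star_mul, hP, mul_smul_comm, smul_mul_assoc, mul_assoc]
  rw [Finset.mul_sum, Finset.sum_mul, Finset.sum_congr rfl fun i _ => hterm i,
    Finset.sum_eq_single l (fun i _ hi => by simp [hF, hi, Ne.symm hi]) (by simp)]
  simp only [hF, if_true]

theorem stmt_2_general {N n : ℕ} (P : Matrix (Fin N) (Fin N) ℂ)
    (hPH : Pᴴ = P)
    (F : Fin n → Matrix (Fin N) (Fin N) ℂ)
    (hQEC : ∀ i j, P * (F j)ᴴ * F i * P = if j = i then P else 0)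
    (η : Fin n → ℝ)
    (hneg : ∃ l, η l = -1)
    (ρ : Matrix (Fin N) (Fin N) ℂ) (hρ : ρ.PosSemidef)
    (hPρP : P * ρ * P ≠ 0) :
    ∃ v : Fin N → ℂ,
      star v ⬝ᵥ (∑ i, (η i : ℂ) • (F i * (P * ρ * P) * (F i)ᴴ)).mulVec v < 0 := by
  obtain ⟨l, hl⟩ := hneg
  have hσ : (P * ρ * P).PosSemidef := by
    simpa only [hPH] using hρ.mul_mul_conjTranspose_same P
  obtain ⟨u, hu⟩ := hσ.exists_dotProduct_mulVec_pos_s2 hPρP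
  have hcompress := star_mul_sum_smul_conj_mul_eq_smul (star_eq_conjTranspose P ▸ hPH)
    (F := F) (by simpa only [star_eq_conjTranspose] using hQEC) (fun i => (η i : ℂ)) ρ l
  simp only [star_eq_conjTranspose, hl, Complex.ofReal_neg, Complex.ofReal_one,
    neg_one_smul] at hcompress
  refine ⟨(F l * P) *ᵥ u, ?_⟩
  rw [star_mulVec_dotProduct_mulVec_mulVec_s2, hcompress, neg_mulVec, dotProduct_neg]
  exact neg_neg_of_pos hu

/-- **Corollary 1.** If the `F i` are unitary, satisfy `P (F j)ᴴ (F i) P = δⱼᵢ P`, at least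
one sign `η l` is `-1`, and `ρ` is positive semidefinite with `P ρ P ≠ 0`, then the output
`∑ i, η i • F i (P ρ P) (F i)ᴴ` is not positive semidefinite: some vector `v` gives a negative
expectation value `v† M v < 0`. -/
theorem stmt_2 {N n : ℕ} (P : Matrix (Fin N) (Fin N) ℂ)
    (hP : P ≠ 0) (hProj : P * P = P) (hPH : Pᴴ = P)
    (F : Fin n → Matrix (Fin N) (Fin N) ℂ)
    (hFunitary : ∀ i, F i ∈ Matrix.unitaryGroup (Fin N) ℂ)
    (hQEC : ∀ i j, P * (F j)ᴴ * F i * P = if j = i then P else 0)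
    (η : Fin n → ℝ) (hη : ∀ i, η i = 1 ∨ η i = -1)
    (hneg : ∃ l, η l = -1)
    (ρ : Matrix (Fin N) (Fin N) ℂ) (hρ : ρ.PosSemidef)
    (hPρP : P * ρ * P ≠ 0) :
    ∃ v : Fin N → ℂ,
      star v ⬝ᵥ (∑ i, (η i : ℂ) • (F i * (P * ρ * P) * (F i)ᴴ)).mulVec v < 0 :=
  stmt_2_general P hPH F hQEC η hneg ρ hρ hPρP
end

section
/- Let P ∈ M_N(ℂ) be a nonzero orthogonal projection, let F_1,…,F_n ∈ M_N(ℂ), let η_1,…,η_n ∈ {+1,−1}, and let d_1,…,d_n ∈ ℝ satisfy P F_i† F_j P = δ_{ij} d_i P for all i, j. Suppose the negative part of the map vanishes on the code space, i.e. F_i P = 0 for every i with η_i = −1. Let ρ ∈ M_N(ℂ) be positive semidefinite and set M = Σ_{i=1}^n η_i · F_i (P ρ P) F_i†. Then: (i) M is positive semidefinite; and (ii) letting K = {k : η_k = +1 and d_k ≠ 0}, there exist unitary matrices U_k ∈ M_N(ℂ) for k ∈ K with F_k P = √(d_k) · U_k P such that the projectors P_k := U_k P U_k† are pairwise orthogonal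 (P_l P_k = 0 for l ≠ k in K) and the recovery map recovers the encoded state up to a nonnegative scalar: Σ_{k∈K} U_k† P_k M P_k U_k = (Σ_{k∈K} d_k) · (P ρ P). -/
/-!
Write `W_k = F_k P`. The conditions say `W_lᴴ W_k = δ_lk d_k P`, so for `d_k > 0` the matrix
`W_k / √d_k` is a partial isometry with initial space the code; extending the isometry from the
code space to the whole space gives a unitary `U_k` with `W_k = √d_k U_k P`. The negative terms of
the map vanish on `PρP`, so `M = Σ η_i W_i ρ W_iᴴ` is positive. Since `(U_k P)ᴴ W_i = δ_ik √d_k P`,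
the code images `U_k P` are mutually orthogonal and compressing `M` by `U_k P` keeps only the
`k`-th term, `d_k PρP`.
-/

open Matrix ComplexOrder

namespace Matrix

variable {n : Type*} [Fintype n]

lemma PosSemidef.nonneg_of_smul {A : Matrix n n ℂ} (hA : A.PosSemidef) (hA0 : A ≠ 0) {c : ℝ}
    (hcA : ((c : ℂ) • A).PosSemidef) : 0 ≤ c := by
  obtain ⟨t, ht, htr⟩ := RCLike.pos_iff_exists_ofReal.mp
    (hA.trace_nonneg.lt_of_ne' (hA.trace_eq_zero_iff.not.mpr hA0))
  have hctr := hcA.trace_nonneg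
  rw [trace_smul, ← htr, smul_eq_mul] at hctr
  exact nonneg_of_mul_nonneg_left (Complex.zero_le_real.mp (by simpa using hctr)) ht

section UnitaryExtension

variable [DecidableEq n] {𝕜 : Type*} [RCLike 𝕜]

lemma mul_eq_self_of_conjTranspose_mul_self_eq {A P : Matrix n n 𝕜} (hP : P * P = P)
    (hA : Aᴴ * A = P) : A * P = A := by
  have hPH : Pᴴ = P := by rw [← hA, conjTranspose_mul, conjTranspose_conjTranspose]
  have hdefect : (A * P - A)ᴴ * (A * P - A) =
      P * (Aᴴ * A) * P - P * (Aᴴ * A) - Aᴴ * A * P + Aᴴ * A := by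
    rw [conjTranspose_sub, conjTranspose_mul, hPH]; noncomm_ring
  rw [hA, hP, hP, sub_self, zero_sub, neg_add_cancel] at hdefect
  exact sub_eq_zero.mp (conjTranspose_mul_self_eq_zero.mp hdefect)

open ContinuousLinearMap in
/-- `A` is isometric on the range of `P`; the unitary is any extension of that isometry. -/
lemma exists_unitary_mul_eq_of_conjTranspose_mul_self_eq {A P : Matrix n n 𝕜}
    (hP : P * P = P) (hA : Aᴴ * A = P) : ∃ U ∈ unitaryGroup n 𝕜, A = U * P := by
  set a := toEuclideanCLM (𝕜 := 𝕜) A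
  set p := toEuclideanCLM (𝕜 := 𝕜) P
  have hap : a * p = a := by rw [← map_mul, mul_eq_self_of_conjTranspose_mul_self_eq hP hA]
  have hpp : p * p = p := by rw [← map_mul, hP]
  have haa : adjoint a * a = p := by
    rw [← star_eq_adjoint, ← map_star, ← map_mul, star_eq_conjTranspose, hA]
  let S := LinearMap.range (p : EuclideanSpace 𝕜 n →ₗ[𝕜] EuclideanSpace 𝕜 n)
  have hnorm (s : S) : ‖a s‖ = ‖(s : EuclideanSpace 𝕜 n)‖ := by
    have hs : p s = s := by
      obtain ⟨x, hx⟩ := s.2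
      rw [← hx]
      exact congr($hpp x)
    rw [← sq_eq_sq₀ (norm_nonneg _) (norm_nonneg _), ← inner_self_eq_norm_sq (𝕜 := 𝕜),
      ← inner_self_eq_norm_sq (𝕜 := 𝕜), ← adjoint_inner_left, ← mul_apply_eq_comp, haa, hs]
  let L : S →ₗᵢ[𝕜] EuclideanSpace 𝕜 n :=
    { toLinearMap := (a : EuclideanSpace 𝕜 n →ₗ[𝕜] EuclideanSpace 𝕜 n) ∘ₗ S.subtype
      norm_map' := hnorm }
  let u := Unitary.linearIsometryEquiv.symm (L.extend.toLinearIsometryEquiv rfl)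
  refine ⟨(toEuclideanCLM (n := n) (𝕜 := 𝕜)).symm u, Unitary.map_mem _ u.2, ?_⟩
  apply_fun toEuclideanCLM (n := n) (𝕜 := 𝕜) using EquivLike.injective _
  rw [map_mul, StarAlgEquiv.apply_symm_apply]
  change a = u * p
  ext1 x
  calc a x = a (p x) := congr($hap.symm x)
    _ = (u : EuclideanSpace 𝕜 n →L[𝕜] EuclideanSpace 𝕜 n) (p x) :=
      (L.extend_apply ⟨p x, LinearMap.mem_range_self _ x⟩).symm

lemma exists_unitary_eq_sqrt_smul_mul {W P : Matrix n n ℂ} (hP : P * P = P) {d : ℝ}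
    (hd : 0 ≤ d) (hW : Wᴴ * W = (d : ℂ) • P) :
    ∃ U ∈ unitaryGroup n ℂ, W = (√d : ℂ) • (U * P) := by
  rcases hd.eq_or_lt with rfl | hd
  · refine ⟨1, one_mem _, ?_⟩
    simpa using conjTranspose_mul_self_eq_zero.mp (by simpa using hW)
  set c : ℂ := (√d : ℂ)
  have hc : c ≠ 0 := by simp [c, Real.sqrt_ne_zero'.mpr hd]
  have hcc : star c * c = d := by
    simp [c, ← Complex.ofReal_mul, Real.mul_self_sqrt hd.le]
  have hinv : star c⁻¹ * c⁻¹ * (d : ℂ) = 1 := by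
    rw [star_inv₀, ← mul_inv, hcc, inv_mul_cancel₀ (by exact_mod_cast hd.ne')]
  obtain ⟨U, hU, hWU⟩ := exists_unitary_mul_eq_of_conjTranspose_mul_self_eq (A := c⁻¹ • W) hP
    (by rw [conjTranspose_smul, Matrix.smul_mul, Matrix.mul_smul, hW, smul_smul, smul_smul, hinv,
      one_smul])
  exact ⟨U, hU, by rw [← hWU, smul_smul, mul_inv_cancel₀ hc, one_smul]⟩

end UnitaryExtension

section KrausSum

variable {ι : Type*} [Fintype ι] {P ρ : Matrix n n ℂ} {W : ι → Matrix n n ℂ}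

lemma posSemidef_sum_smul_mul_mul_conjTranspose (hρ : ρ.PosSemidef) {η : ι → ℝ}
    (hη : ∀ i, 0 ≤ η i ∨ W i = 0) :
    (∑ i, (η i : ℂ) • (W i * ρ * (W i)ᴴ)).PosSemidef := by
  refine posSemidef_sum _ fun i _ => ?_
  rcases hη i with hηi | hWi
  · exact (hρ.mul_mul_conjTranspose_same (W i)).smul (by exact_mod_cast hηi)
  · simpa [hWi] using PosSemidef.zero

lemma conjTranspose_mul_sum_smul_mul_mul_conjTranspose_mul [DecidableEq ι] {V : Matrix n n ℂ}
    (η : ι → ℂ) {k : ι} {c : ℂ} (hV : ∀ i, Vᴴ * W i = if i = k then c • P else 0) :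
    Vᴴ * (∑ i, η i • (W i * ρ * (W i)ᴴ)) * V = (η k * (star c * c)) • (P * ρ * Pᴴ) := by
  have hterm (i : ι) : Vᴴ * (η i • (W i * ρ * (W i)ᴴ)) * V =
      η i • ((Vᴴ * W i) * ρ * (Vᴴ * W i)ᴴ) := by
    simp [conjTranspose_mul, Matrix.mul_assoc]
  rw [Finset.mul_sum, Finset.sum_mul, Finset.sum_congr rfl fun i _ => hterm i,
    Finset.sum_eq_single k (fun i _ hik => by simp [hV i, hik]) (by simp), hV k, if_pos rfl]
  simp [conjTranspose_smul, smul_smul, mul_assoc]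

end KrausSum

section KnillLaflamme

variable {ι : Type*} [DecidableEq ι] {P : Matrix n n ℂ} {W : ι → Matrix n n ℂ}
  {d : ι → ℝ}

lemma conjTranspose_mul_eq_ite_of_eq_sqrt_smul
    (hW : ∀ i j, (W i)ᴴ * W j = (if i = j then (d i : ℂ) else 0) • P) {V : Matrix n n ℂ} {k : ι}
    (hk : 0 < d k) (hV : W k = (√(d k) : ℂ) • V) (i : ι) :
    Vᴴ * W i = if i = k then (√(d k) : ℂ) • P else 0 := by
  have hc : (√(d k) : ℂ) ≠ 0 := by simp [Real.sqrt_ne_zero'.mpr hk]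
  apply smul_right_injective _ hc
  have hki := hW k i
  rw [hV, conjTranspose_smul, Matrix.smul_mul, Complex.star_def, Complex.conj_ofReal] at hki
  change _ • _ = _ • _
  rw [hki]
  rcases eq_or_ne i k with rfl | hik
  · rw [if_pos rfl, if_pos rfl, smul_smul, ← Complex.ofReal_mul, Real.mul_self_sqrt hk.le]
  · rw [if_neg hik, if_neg hik.symm, zero_smul, smul_zero]

lemma conj_projection_mul_conj_projection_eq_zero (hPH : Pᴴ = P)
    (hW : ∀ i j, (W i)ᴴ * W j = (if i = j then (d i : ℂ) else 0) • P) {k l : ι}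
    (hk : 0 < d k) (hl : 0 < d l) (hlk : l ≠ k) {Uk Ul : Matrix n n ℂ}
    (hWk : W k = (√(d k) : ℂ) • (Uk * P)) (hWl : W l = (√(d l) : ℂ) • (Ul * P)) :
    Ul * P * Ulᴴ * (Uk * P * Ukᴴ) = 0 := by
  have hUlWk := conjTranspose_mul_eq_ite_of_eq_sqrt_smul hW hl hWl k
  rw [if_neg hlk.symm, hWk, Matrix.mul_smul] at hUlWk
  have hUlk : (Ul * P)ᴴ * (Uk * P) = 0 :=
    (smul_eq_zero.mp hUlWk).resolve_left (by simp [Real.sqrt_ne_zero'.mpr hk])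
  calc Ul * P * Ulᴴ * (Uk * P * Ukᴴ) = Ul * ((Ul * P)ᴴ * (Uk * P)) * Ukᴴ := by
        rw [conjTranspose_mul, hPH]; simp only [Matrix.mul_assoc]
    _ = 0 := by rw [hUlk, Matrix.mul_zero, Matrix.zero_mul]

lemma recovery_eq_smul [Fintype ι] [DecidableEq n] (hPH : Pᴴ = P)
    (hW : ∀ i j, (W i)ᴴ * W j = (if i = j then (d i : ℂ) else 0) • P) {k : ι} (hk : 0 < d k)
    {U : Matrix n n ℂ} (hU : U ∈ unitaryGroup n ℂ) (hWk : W k = (√(d k) : ℂ) • (U * P)) {η : ι → ℂ}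
    (hη : η k = 1) (ρ : Matrix n n ℂ) :
    Uᴴ * (U * P * Uᴴ) * (∑ i, η i • (W i * ρ * (W i)ᴴ)) * (U * P * Uᴴ) * U =
      (d k : ℂ) • (P * ρ * P) := by
  set M := ∑ i, η i • (W i * ρ * (W i)ᴴ)
  have hUU : Uᴴ * U = 1 := mem_unitaryGroup_iff'.mp hU
  have hsandwich : Uᴴ * (U * P * Uᴴ) * M * (U * P * Uᴴ) * U = (U * P)ᴴ * M * (U * P) :=
    calc Uᴴ * (U * P * Uᴴ) * M * (U * P * Uᴴ) * U
        = (Uᴴ * U) * (P * Uᴴ * M * U * P) * (Uᴴ * U) := by simp only [Matrix.mul_assoc]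
      _ = (U * P)ᴴ * M * (U * P) := by
        rw [hUU, conjTranspose_mul, hPH]
        simp only [Matrix.one_mul, Matrix.mul_one, Matrix.mul_assoc]
  rw [hsandwich, conjTranspose_mul_sum_smul_mul_mul_conjTranspose_mul η
    (conjTranspose_mul_eq_ite_of_eq_sqrt_smul hW hk hWk), hη, hPH, Complex.star_def,
    Complex.conj_ofReal, ← Complex.ofReal_mul, Real.mul_self_sqrt hk.le, one_mul]

end KnillLaflamme

end Matrix

/-- **Theorem 2 (sufficient conditions for reversibility).** If the diagonalized QEC
conditions hold and the negative part of the map vanishes on the code space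
(`F i * P = 0` whenever `η i = -1`), then for any positive semidefinite `ρ` the output
`M = ∑ i, η i • F i (P ρ P) (F i)ᴴ` is positive semidefinite, and there are unitaries
`U k` with `F k P = √(d k) • U k P` (for `k` with `η k = 1` and `d k ≠ 0`) whose rotated
projectors `P k = U k P (U k)ᴴ` are pairwise orthogonal, and the recovery map returns
`(∑ d k) • (P ρ P)`. -/
theorem stmt_3 {N n : ℕ} (P : Matrix (Fin N) (Fin N) ℂ)
    (hP : P ≠ 0) (hProj : P * P = P) (hPH : Pᴴ = P)
    (F : Fin n → Matrix (Fin N) (Fin N) ℂ)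
    (η : Fin n → ℝ) (hη : ∀ i, η i = 1 ∨ η i = -1)
    (d : Fin n → ℝ)
    (hQEC : ∀ i j, P * (F i)ᴴ * F j * P = (if i = j then (d i : ℂ) else 0) • P)
    (hnegvanish : ∀ i, η i = -1 → F i * P = 0)
    (ρ : Matrix (Fin N) (Fin N) ℂ) (hρ : ρ.PosSemidef) :
    (∑ i, (η i : ℂ) • (F i * (P * ρ * P) * (F i)ᴴ)).PosSemidef ∧
    ∃ U : Fin n → Matrix (Fin N) (Fin N) ℂ,
      (∀ k ∈ Finset.univ.filter (fun k => η k = 1 ∧ d k ≠ 0),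
        U k ∈ Matrix.unitaryGroup (Fin N) ℂ ∧
        F k * P = (Real.sqrt (d k) : ℂ) • (U k * P)) ∧
      (∀ k ∈ Finset.univ.filter (fun k => η k = 1 ∧ d k ≠ 0),
        ∀ l ∈ Finset.univ.filter (fun k => η k = 1 ∧ d k ≠ 0), l ≠ k →
        (U l * P * (U l)ᴴ) * (U k * P * (U k)ᴴ) = 0) ∧
      ∑ k ∈ Finset.univ.filter (fun k => η k = 1 ∧ d k ≠ 0),
        (U k)ᴴ * (U k * P * (U k)ᴴ) *
          (∑ i, (η i : ℂ) • (F i * (P * ρ * P) * (F i)ᴴ)) *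
          (U k * P * (U k)ᴴ) * U k =
        ((∑ k ∈ Finset.univ.filter (fun k => η k = 1 ∧ d k ≠ 0), d k : ℝ) : ℂ) •
          (P * ρ * P) := by
  have hKL : ∀ i j, (F i * P)ᴴ * (F j * P) = (if i = j then (d i : ℂ) else 0) • P := by
    intro i j
    rw [← hQEC, conjTranspose_mul, hPH]
    simp only [Matrix.mul_assoc]
  have hKLdiag (i : Fin n) : (F i * P)ᴴ * (F i * P) = (d i : ℂ) • P := by rw [hKL, if_pos rfl]
  have hPpos : P.PosSemidef := by simpa [hPH, hProj] using posSemidef_conjTranspose_mul_self P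
  have hd (i : Fin n) : 0 ≤ d i :=
    hPpos.nonneg_of_smul hP (hKLdiag i ▸ posSemidef_conjTranspose_mul_self (F i * P))
  choose U hU hFU using fun k => exists_unitary_eq_sqrt_smul_mul hProj (hd k) (hKLdiag k)
  have hK {k : Fin n} (hk : k ∈ Finset.univ.filter (fun k => η k = 1 ∧ d k ≠ 0)) :
      η k = 1 ∧ 0 < d k := by
    obtain ⟨hηk, hdk⟩ := (Finset.mem_filter.mp hk).2
    exact ⟨hηk, (hd k).lt_of_ne' hdk⟩
  have hM : ∑ i, (η i : ℂ) • (F i * (P * ρ * P) * (F i)ᴴ) =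
      ∑ i, (η i : ℂ) • (F i * P * ρ * (F i * P)ᴴ) := by
    simp only [conjTranspose_mul, hPH, Matrix.mul_assoc]
  rw [hM]
  refine ⟨?_, U, fun k _ => ⟨hU k, hFU k⟩, fun k hk l hl hlk => ?_, ?_⟩
  · exact posSemidef_sum_smul_mul_mul_conjTranspose hρ fun i =>
      (hη i).imp (fun h => zero_le_one.trans h.ge) (hnegvanish i)
  · exact conj_projection_mul_conj_projection_eq_zero hPH hKL (hK hk).2 (hK hl).2 hlk (hFU k)
      (hFU l)
  · rw [Finset.sum_congr rfl fun k hk => recovery_eq_smul hPH hKL (hK hk).2 (hU k) (hFU k)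
      (by simp [(hK hk).1]) ρ, ← Finset.sum_smul, Complex.ofReal_sum]
end

section
/- Let P ∈ M_N(ℂ) be an orthogonal projection, let F_k, F_l ∈ M_N(ℂ), let U_k, U_l ∈ M_N(ℂ) be unitary, and let d_k, d_l > 0 be real numbers such that F_k P = √(d_k) · U_k P, F_l P = √(d_l) · U_l P, and P F_l† F_k P = 0. Then the rotated code-space projectors are orthogonal: (U_l P U_l†)(U_k P U_k†) = 0. -/
open Matrix

/-- **Orthogonality of the rotated code spaces.** If `F k P = √(d k) • U k P`,
`F l P = √(d l) • U l P` with `U k`, `U l` unitary, `d k, d l > 0`, and the QEC condition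
`P (F l)ᴴ (F k) P = 0` holds, then the rotated projectors are orthogonal:
`(U l P (U l)ᴴ) (U k P (U k)ᴴ) = 0`. -/
theorem stmt_5 {N : ℕ} (P : Matrix (Fin N) (Fin N) ℂ)
    (hProj : P * P = P) (hPH : Pᴴ = P)
    (Fk Fl Uk Ul : Matrix (Fin N) (Fin N) ℂ)
    (hUk : Uk ∈ Matrix.unitaryGroup (Fin N) ℂ)
    (hUl : Ul ∈ Matrix.unitaryGroup (Fin N) ℂ)
    (dk dl : ℝ) (hdk : 0 < dk) (hdl : 0 < dl)
    (hFk : Fk * P = (Real.sqrt dk : ℂ) • (Uk * P))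
    (hFl : Fl * P = (Real.sqrt dl : ℂ) • (Ul * P))
    (hQEC : P * Flᴴ * Fk * P = 0) :
    (Ul * P * Ulᴴ) * (Uk * P * Ukᴴ) = 0 := by
  have hkey : P * Ulᴴ * Uk * P = 0 := by
    have h2 : P * Flᴴ = (Fl * P)ᴴ := by rw [conjTranspose_mul, hPH]
    have h1 : P * Flᴴ * (Fk * P) = ((Real.sqrt dl * Real.sqrt dk : ℝ) : ℂ) • (P * Ulᴴ * Uk * P) := by
      rw [h2, hFk, hFl, conjTranspose_smul, conjTranspose_mul, hPH]
      simp only [Matrix.smul_mul, Matrix.mul_smul, smul_smul, Complex.ofReal_mul,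
        Complex.star_def, Complex.conj_ofReal, mul_assoc]
      rw [mul_comm ((Real.sqrt dk : ℂ)) _]
    have h3 : ((Real.sqrt dl * Real.sqrt dk : ℝ) : ℂ) • (P * Ulᴴ * Uk * P) = 0 := by
      rw [← h1, ← mul_assoc, hQEC]
    have hne : ((Real.sqrt dl * Real.sqrt dk : ℝ) : ℂ) ≠ 0 := by
      have : (0:ℝ) < Real.sqrt dl * Real.sqrt dk :=
        mul_pos (Real.sqrt_pos.mpr hdl) (Real.sqrt_pos.mpr hdk)
      exact_mod_cast ne_of_gt this
    exact (smul_eq_zero.mp h3).resolve_left hne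
  calc Ul * P * Ulᴴ * (Uk * P * Ukᴴ)
      = Ul * (P * Ulᴴ * Uk * P) * Ukᴴ := by noncomm_ring
    _ = 0 := by rw [hkey]; simp
end

section
/- Consider the three-qubit inhomogeneous bit-flip map Φ_IBF(ρ) = c_0 ρ + c_1 (X_1 ρ X_1 + X_2 ρ X_2 + X_3 ρ X_3) on M_8(ℂ), where c_0, c_1 ∈ ℝ satisfy c_0 + 3c_1 = 1 and c_0 · c_1 < 0. Let P = |000⟩⟨000| + |111⟩⟨111| be the projector onto the code space span{|000⟩, |111⟩}. Then for every positive semidefinite ρ ∈ M_8(ℂ) with trace 1 satisfying ρ = P ρ P, the output Φ_IBF(ρ) is not positive semidefinite. -/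
open Matrix Kronecker ComplexOrder

/-- The Pauli `X` matrix. -/
noncomputable def pauliX : Matrix (Fin 2) (Fin 2) ℂ := !![0, 1; 1, 0]

/-- `X₁ = X ⊗ I ⊗ I` on three qubits. -/
noncomputable def X₁ : Matrix ((Fin 2 × Fin 2) × Fin 2) ((Fin 2 × Fin 2) × Fin 2) ℂ :=
  (pauliX ⊗ₖ (1 : Matrix (Fin 2) (Fin 2) ℂ)) ⊗ₖ (1 : Matrix (Fin 2) (Fin 2) ℂ)

/-- `X₂ = I ⊗ X ⊗ I` on three qubits. -/
noncomputable def X₂ : Matrix ((Fin 2 × Fin 2) × Fin 2) ((Fin 2 × Fin 2) × Fin 2) ℂ :=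
  ((1 : Matrix (Fin 2) (Fin 2) ℂ) ⊗ₖ pauliX) ⊗ₖ (1 : Matrix (Fin 2) (Fin 2) ℂ)

/-- `X₃ = I ⊗ I ⊗ X` on three qubits. -/
noncomputable def X₃ : Matrix ((Fin 2 × Fin 2) × Fin 2) ((Fin 2 × Fin 2) × Fin 2) ℂ :=
  ((1 : Matrix (Fin 2) (Fin 2) ℂ) ⊗ₖ (1 : Matrix (Fin 2) (Fin 2) ℂ)) ⊗ₖ pauliX

/-- The projector `P = |000⟩⟨000| + |111⟩⟨111|` onto the code space. -/
noncomputable def codeProj : Matrix ((Fin 2 × Fin 2) × Fin 2) ((Fin 2 × Fin 2) × Fin 2) ℂ :=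
  Matrix.single ((0, 0), 0) ((0, 0), 0) 1 +
    Matrix.single ((1, 1), 1) ((1, 1), 1) 1

/-!
Each `Xₖ` is the permutation matrix of the involution flipping the `k`-th bit, so conjugating by
`Xₖ` permutes the diagonal: `Φ(ρ)ₛₛ = c₀ ρₛₛ + c₁ ∑ₖ ρ_{s ⊕ eₖ, s ⊕ eₖ}`. On the code space the
only nonzero diagonal entries of `ρ` are `ρ₀₀₀` and `ρ₁₁₁`, which add up to `tr ρ = 1`. Hence
`Φ(ρ)₀₀₀ + Φ(ρ)₁₁₁ = c₀` and `Φ(ρ)₁₀₀ + Φ(ρ)₀₁₁ = c₁`, so positivity of `Φ(ρ)` would force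
`c₀ ≥ 0` and `c₁ ≥ 0`, contradicting `c₀ c₁ < 0`.
-/

open Equiv

lemma permMatrix_mul_mul_permMatrix_of_involutive {n R : Type*} [DecidableEq n] [Fintype n]
    [NonAssocSemiring R] {σ : Perm n} (hσ : Function.Involutive σ) (A : Matrix n n R) :
    σ.permMatrix R * A * σ.permMatrix R = A.submatrix σ σ := by
  have hinv : σ.symm = σ := Equiv.ext fun i => σ.symm_apply_eq.2 (hσ i).symm
  rw [Perm.permMatrix, PEquiv.toMatrix_toPEquiv_mul, PEquiv.mul_toMatrix_toPEquiv, hinv]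
  rfl

lemma permMatrix_kronecker_permMatrix {m n R : Type*} [DecidableEq m] [DecidableEq n]
    [MulZeroOneClass R] (σ : Perm m) (τ : Perm n) :
    σ.permMatrix R ⊗ₖ τ.permMatrix R = Perm.permMatrix R (σ.prodCongr τ) := by
  ext ⟨i, i'⟩ ⟨j, j'⟩
  simp only [kroneckerMap_apply, PEquiv.toMatrix_toPEquiv_apply, Pi.single_apply, prodCongr_apply,
    Prod.map, Prod.mk.injEq]
  split_ifs <;> simp_all

lemma pauliX_eq_permMatrix : pauliX = (swap 0 1 : Perm (Fin 2)).permMatrix ℂ := by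
  ext i j
  fin_cases i <;> fin_cases j <;> simp [pauliX]

abbrev ThreeQubit := (Fin 2 × Fin 2) × Fin 2

def flip₁ : Perm ThreeQubit := ((swap 0 1).prodCongr 1).prodCongr 1

def flip₂ : Perm ThreeQubit := ((1 : Perm (Fin 2)).prodCongr (swap 0 1)).prodCongr 1

def flip₃ : Perm ThreeQubit := (1 : Perm (Fin 2 × Fin 2)).prodCongr (swap 0 1)

lemma X₁_mul_mul_X₁ (A : Matrix ThreeQubit ThreeQubit ℂ) :
    X₁ * A * X₁ = A.submatrix flip₁ flip₁ := by
  have hX : X₁ = flip₁.permMatrix ℂ := by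
    rw [X₁, pauliX_eq_permMatrix, ← permMatrix_one, permMatrix_kronecker_permMatrix,
      permMatrix_kronecker_permMatrix]
    rfl
  rw [hX]
  exact permMatrix_mul_mul_permMatrix_of_involutive (by rintro ⟨⟨a, b⟩, c⟩; simp [flip₁]) A

lemma X₂_mul_mul_X₂ (A : Matrix ThreeQubit ThreeQubit ℂ) :
    X₂ * A * X₂ = A.submatrix flip₂ flip₂ := by
  have hX : X₂ = flip₂.permMatrix ℂ := by
    rw [X₂, pauliX_eq_permMatrix, ← permMatrix_one, permMatrix_kronecker_permMatrix,
      permMatrix_kronecker_permMatrix]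
    rfl
  rw [hX]
  exact permMatrix_mul_mul_permMatrix_of_involutive (by rintro ⟨⟨a, b⟩, c⟩; simp [flip₂]) A

lemma X₃_mul_mul_X₃ (A : Matrix ThreeQubit ThreeQubit ℂ) :
    X₃ * A * X₃ = A.submatrix flip₃ flip₃ := by
  have hX : X₃ = flip₃.permMatrix ℂ := by
    rw [X₃, pauliX_eq_permMatrix, ← permMatrix_one, permMatrix_kronecker_permMatrix,
      permMatrix_kronecker_permMatrix]
    rfl
  rw [hX]
  exact permMatrix_mul_mul_permMatrix_of_involutive (by rintro ⟨⟨a, b⟩, c⟩; simp [flip₃]) A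

noncomputable def inhomBitFlip (c₀ c₁ : ℝ) (A : Matrix ThreeQubit ThreeQubit ℂ) :
    Matrix ThreeQubit ThreeQubit ℂ :=
  (c₀ : ℂ) • A + (c₁ : ℂ) • (X₁ * A * X₁ + X₂ * A * X₂ + X₃ * A * X₃)

lemma inhomBitFlip_apply_self (c₀ c₁ : ℝ) (A : Matrix ThreeQubit ThreeQubit ℂ) (i : ThreeQubit) :
    inhomBitFlip c₀ c₁ A i i =
      c₀ * A i i + c₁ * (A (flip₁ i) (flip₁ i) + A (flip₂ i) (flip₂ i) + A (flip₃ i) (flip₃ i)) := by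
  simp [inhomBitFlip, X₁_mul_mul_X₁, X₂_mul_mul_X₂, X₃_mul_mul_X₃, mul_add]

section CodeSpace

variable {A : Matrix ThreeQubit ThreeQubit ℂ}

lemma codeProj_eq_diagonal :
    codeProj = diagonal (Pi.single ((0, 0), 0) 1 + Pi.single ((1, 1), 1) 1) := by
  rw [codeProj, ← diagonal_single, ← diagonal_single, diagonal_add]
  rfl

lemma apply_self_eq_zero_of_eq_codeProj_mul_mul_codeProj (hA : A = codeProj * A * codeProj)
    {i : ThreeQubit} (h₀ : i ≠ ((0, 0), 0)) (h₁ : i ≠ ((1, 1), 1)) : A i i = 0 := by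
  rw [hA, codeProj_eq_diagonal, mul_diagonal, diagonal_mul]
  simp [h₀, h₁]

lemma trace_eq_of_eq_codeProj_mul_mul_codeProj (hA : A = codeProj * A * codeProj) :
    A.trace = A ((0, 0), 0) ((0, 0), 0) + A ((1, 1), 1) ((1, 1), 1) :=
  Fintype.sum_eq_add _ _ (by decide) fun _ hi =>
    apply_self_eq_zero_of_eq_codeProj_mul_mul_codeProj hA hi.1 hi.2

lemma inhomBitFlip_apply_000_add_apply_111 (c₀ c₁ : ℝ) (hA : A = codeProj * A * codeProj) :
    inhomBitFlip c₀ c₁ A ((0, 0), 0) ((0, 0), 0) + inhomBitFlip c₀ c₁ A ((1, 1), 1) ((1, 1), 1) =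
      c₀ * A.trace := by
  simp [inhomBitFlip_apply_self, trace_eq_of_eq_codeProj_mul_mul_codeProj hA, flip₁, flip₂, flip₃,
    apply_self_eq_zero_of_eq_codeProj_mul_mul_codeProj hA, mul_add]

lemma inhomBitFlip_apply_100_add_apply_011 (c₀ c₁ : ℝ) (hA : A = codeProj * A * codeProj) :
    inhomBitFlip c₀ c₁ A ((1, 0), 0) ((1, 0), 0) + inhomBitFlip c₀ c₁ A ((0, 1), 1) ((0, 1), 1) =
      c₁ * A.trace := by
  simp [inhomBitFlip_apply_self, trace_eq_of_eq_codeProj_mul_mul_codeProj hA, flip₁, flip₂, flip₃,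
    apply_self_eq_zero_of_eq_codeProj_mul_mul_codeProj hA, mul_add]

end CodeSpace

theorem stmt_6_general (c₀ c₁ : ℝ) (hsign : c₀ * c₁ < 0)
    (ρ : Matrix ((Fin 2 × Fin 2) × Fin 2) ((Fin 2 × Fin 2) × Fin 2) ℂ)
    (htr : ρ.trace = 1) (hcode : ρ = codeProj * ρ * codeProj) :
    ¬ ((c₀ : ℂ) • ρ +
        (c₁ : ℂ) • (X₁ * ρ * X₁ + X₂ * ρ * X₂ + X₃ * ρ * X₃)).PosSemidef := by
  intro hΦ
  change (inhomBitFlip c₀ c₁ ρ).PosSemidef at hΦ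
  have hc₀ : (0 : ℂ) ≤ c₀ := by
    rw [← mul_one (c₀ : ℂ), ← htr, ← inhomBitFlip_apply_000_add_apply_111 c₀ c₁ hcode]
    exact add_nonneg hΦ.diag_nonneg hΦ.diag_nonneg
  have hc₁ : (0 : ℂ) ≤ c₁ := by
    rw [← mul_one (c₁ : ℂ), ← htr, ← inhomBitFlip_apply_100_add_apply_011 c₀ c₁ hcode]
    exact add_nonneg hΦ.diag_nonneg hΦ.diag_nonneg
  exact hsign.not_ge (mul_nonneg (Complex.zero_le_real.1 hc₀) (Complex.zero_le_real.1 hc₁))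

/-- **Example (failure of positivity for the inhomogeneous bit-flip map).**
For `Φ_IBF(ρ) = c₀ ρ + c₁ ∑ₙ Xₙ ρ Xₙ` with `c₀ + 3c₁ = 1` and `c₀ c₁ < 0`, any density
matrix `ρ` supported on the code space `span{|000⟩, |111⟩}` has non-positive-semidefinite
output `Φ_IBF(ρ)`. -/
theorem stmt_6 (c₀ c₁ : ℝ) (hsum : c₀ + 3 * c₁ = 1) (hsign : c₀ * c₁ < 0)
    (ρ : Matrix ((Fin 2 × Fin 2) × Fin 2) ((Fin 2 × Fin 2) × Fin 2) ℂ)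
    (hρ : ρ.PosSemidef) (htr : ρ.trace = 1) (hcode : ρ = codeProj * ρ * codeProj) :
    ¬ ((c₀ : ℂ) • ρ +
        (c₁ : ℂ) • (X₁ * ρ * X₁ + X₂ * ρ * X₂ + X₃ * ρ * X₃)).PosSemidef :=
  stmt_6_general c₀ c₁ hsign ρ htr hcode
end

section
/- Let η_1,…,η_n ∈ {+1, −1} and η = diag(η_1,…,η_n) ∈ M_n(ℂ). Let v_1,…,v_n ∈ ℂ^N and w_1,…,w_n ∈ ℂ^N each be linearly independent families, and suppose they generate the same operator with the same signs: Σ_{i=1}^n η_i · v_i v_i† = Σ_{j=1}^n η_j · w_j w_j†. Then there exists a matrix A ∈ M_n(ℂ) that is pseudounitary with respect to η (A η A† = η, equivalently A† η A = η) such that w_j = Σ_i A_{ij} v_i for all j. -/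
open Matrix

section aux

open scoped ComplexOrder

variable {n N : ℕ}

private lemma aux_mulVec_eq_zero {u : Fin n → Fin N → ℂ}
    (hu : LinearIndependent ℂ u) {x : Fin n → ℂ}
    (h : (Matrix.of fun a i => u i a) *ᵥ x = 0) : x = 0 := by
  rw [Fintype.linearIndependent_iff] at hu
  funext i
  refine hu x ?_ i
  funext a
  have := congr_fun h a
  simpa [Matrix.mulVec, dotProduct, mul_comm] using this

private lemma aux_mul_cancel {m : Type*} [Fintype m] {u : Fin n → Fin N → ℂ}
    (hu : LinearIndependent ℂ u) {X Y : Matrix (Fin n) m ℂ}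
    (h : (Matrix.of fun a i => u i a) * X = (Matrix.of fun a i => u i a) * Y) : X = Y := by
  set U : Matrix (Fin N) (Fin n) ℂ := Matrix.of fun a i => u i a
  ext i j
  have h1 : U *ᵥ (fun k => X k j) = U *ᵥ (fun k => Y k j) := by
    funext a
    have := congr_fun (congr_fun h a) j
    simpa [Matrix.mulVec, dotProduct, Matrix.mul_apply] using this
  have h2 : U *ᵥ ((fun k => X k j) - fun k => Y k j) = 0 := by
    rw [Matrix.mulVec_sub, h1, sub_self]
  have := congr_fun (aux_mulVec_eq_zero hu h2) i
  simpa [sub_eq_zero] using this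

private lemma aux_gram_isUnit {u : Fin n → Fin N → ℂ}
    (hu : LinearIndependent ℂ u) :
    IsUnit ((Matrix.of fun a i => u i a)ᴴ * (Matrix.of fun a i => u i a)).det := by
  set U : Matrix (Fin N) (Fin n) ℂ := Matrix.of fun a i => u i a
  rw [isUnit_iff_ne_zero]
  intro hdet
  obtain ⟨x, hx0, hx⟩ := (Matrix.exists_mulVec_eq_zero_iff).2 hdet
  apply hx0
  have key : star (U *ᵥ x) ⬝ᵥ (U *ᵥ x) = 0 := by
    rw [Matrix.star_mulVec, ← Matrix.dotProduct_mulVec, Matrix.mulVec_mulVec, hx,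
      dotProduct_zero]
  exact aux_mulVec_eq_zero hu (dotProduct_star_self_eq_zero.mp key)

end aux

/-- **Pseudounitary freedom for operators (necessity).** If the linearly independent
families `v` and `w` generate the same operator with the same signs
`∑ i, η i • v i (v i)† = ∑ j, η j • w j (w j)†`, then there is a pseudounitary `A`
(with respect to `η = diag(η₁,…,ηₙ)`) such that `w j = ∑ i, A i j • v i`. -/
theorem stmt_12 {n N : ℕ} (η : Fin n → ℝ) (hη : ∀ i, η i = 1 ∨ η i = -1)
    (v w : Fin n → Fin N → ℂ)
    (hv : LinearIndependent ℂ v) (hw : LinearIndependent ℂ w)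
    (heq : ∑ i, (η i : ℂ) • Matrix.vecMulVec (v i) (star (v i)) =
      ∑ j, (η j : ℂ) • Matrix.vecMulVec (w j) (star (w j))) :
    ∃ A : Matrix (Fin n) (Fin n) ℂ,
      Aᴴ * Matrix.diagonal (fun i => (η i : ℂ)) * A =
        Matrix.diagonal (fun i => (η i : ℂ)) ∧
      ∀ j, w j = ∑ i, A i j • v i := by
  set D : Matrix (Fin n) (Fin n) ℂ := Matrix.diagonal (fun i => (η i : ℂ)) with hD
  set V : Matrix (Fin N) (Fin n) ℂ := Matrix.of fun a i => v i a with hV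
  set W : Matrix (Fin N) (Fin n) ℂ := Matrix.of fun a i => w i a with hW
  -- D * D = 1
  have hη2 : ∀ i, (η i : ℂ) * (η i : ℂ) = 1 := by
    intro i; rcases hη i with h | h <;> rw [h] <;> norm_num
  have hDD : D * D = 1 := by
    rw [hD, Matrix.diagonal_mul_diagonal,
      show (fun i => (η i : ℂ) * (η i : ℂ)) = fun _ => (1 : ℂ) from funext hη2,
      Matrix.diagonal_one]
  have hDherm : Dᴴ = D := by
    rw [hD]
    ext i j
    rcases eq_or_ne i j with rfl | hij
    · simp [Matrix.conjTranspose_apply, Complex.conj_ofReal]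
    · simp [Matrix.conjTranspose_apply, Matrix.diagonal_apply_ne _ hij,
        Matrix.diagonal_apply_ne _ hij.symm]
  -- heq in matrix form
  have heq' : V * D * Vᴴ = W * D * Wᴴ := by
    have key : ∀ (u : Fin n → Fin N → ℂ),
        (Matrix.of fun a i => u i a) * D * (Matrix.of fun a i => u i a)ᴴ =
          ∑ i, (η i : ℂ) • Matrix.vecMulVec (u i) (star (u i)) := by
      intro u
      ext a b
      simp only [hD, Matrix.mul_apply, Matrix.mul_diagonal, Matrix.sum_apply,
        Matrix.smul_apply, Matrix.vecMulVec_apply, Matrix.conjTranspose_apply,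
        Matrix.of_apply, smul_eq_mul, Pi.star_apply]
      refine Finset.sum_congr rfl fun i _ => ?_
      simp only [Matrix.diagonal_apply, mul_ite, mul_zero, Finset.sum_ite_eq',
        Finset.mem_univ, if_true]
      ring
    rw [key v, key w, heq]
  -- Gram matrix of w
  set G : Matrix (Fin n) (Fin n) ℂ := Wᴴ * W with hG
  have hGu : IsUnit G.det := aux_gram_isUnit hw
  have hDu : IsUnit D.det := Matrix.isUnit_det_of_right_inverse hDD
  have hDGu : IsUnit (D * G).det := by rw [Matrix.det_mul]; exact hDu.mul hGu
  -- column space argument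
  have hcol : W * (D * G) = V * D * Vᴴ * W := by
    have h := congr_arg (· * W) heq'
    rw [hG]
    calc W * (D * (Wᴴ * W)) = W * D * Wᴴ * W := by simp only [Matrix.mul_assoc]
      _ = V * D * Vᴴ * W := h.symm
  set A : Matrix (Fin n) (Fin n) ℂ := D * Vᴴ * W * (D * G)⁻¹ with hA
  have hWA : W = V * A := by
    calc W = W * (D * G) * (D * G)⁻¹ := by
          rw [Matrix.mul_assoc, Matrix.mul_nonsing_inv _ hDGu, Matrix.mul_one]
      _ = V * D * Vᴴ * W * (D * G)⁻¹ := by rw [hcol]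
      _ = V * A := by rw [hA]; simp only [Matrix.mul_assoc]
  -- A D Aᴴ = D
  have hADA : A * D * Aᴴ = D := by
    have h1 : V * (D * Vᴴ) = V * (A * (D * (Aᴴ * Vᴴ))) := by
      have h := heq'
      rw [hWA, Matrix.conjTranspose_mul] at h
      simpa only [Matrix.mul_assoc] using h
    have h3 : D * Vᴴ = A * (D * (Aᴴ * Vᴴ)) := aux_mul_cancel hv h1
    have h4 : V * D = V * (A * D * Aᴴ) := by
      have h := congr_arg Matrix.conjTranspose h3
      simp only [Matrix.conjTranspose_mul, Matrix.conjTranspose_conjTranspose, hDherm] at h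
      -- h : V * Dᴴ-stuff : (D * Vᴴ)ᴴ = V * D ; RHS similar
      calc V * D = V * A * D * Aᴴ := by
            simpa only [Matrix.mul_assoc] using h
        _ = V * (A * D * Aᴴ) := by simp only [Matrix.mul_assoc]
    exact (aux_mul_cancel hv h4).symm
  -- conclude
  refine ⟨A, ?_, ?_⟩
  · have hr : A * (D * Aᴴ * D) = 1 := by
      calc A * (D * Aᴴ * D) = A * D * Aᴴ * D := by noncomm_ring
        _ = D * D := by rw [hADA]
        _ = 1 := hDD
    have hl : (D * Aᴴ * D) * A = 1 := mul_eq_one_comm.mp hr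
    calc Aᴴ * D * A = D * D * (Aᴴ * D * A) := by rw [hDD, one_mul]
      _ = D * ((D * Aᴴ * D) * A) := by noncomm_ring
      _ = D := by rw [hl, mul_one]
  · intro j
    funext a
    have h := congr_fun (congr_fun hWA a) j
    simp only [Matrix.mul_apply, hV, hW, Matrix.of_apply] at h
    show W a j = _
    rw [show W a j = w j a from rfl, h]
    simp [Finset.sum_apply, mul_comm]
end

section
/- Let η_1,…,η_n ∈ {+1, −1} and η = diag(η_1,…,η_n) ∈ M_n(ℂ). Let C_1,…,C_n ∈ M_N(ℂ) and D_1,…,D_n ∈ M_N(ℂ) each be linearly independent families of matrices, and suppose they give rise to the same map with the same signs: for every ρ ∈ M_N(ℂ), Σ_{i=1}^n η_i · C_i ρ C_i† = Σ_{j=1}^n η_j · D_j ρ D_j†. Then there exists a matrix u ∈ M_n(ℂ) that is pseudounitary with respect to η (u† η u = η) such that D_j = Σ_i u_{ij} C_i for all j. -/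
/-!
Let `A` be the `N² × n` matrix whose `i`-th column lists the entries of `C i`, and `B` likewise
for `D`. Testing the hypothesis on the matrix units shows that it says exactly
`A η Aᴴ = B η Bᴴ`, and linear independence gives left inverses `L A = 1`, `M B = 1`.
Then `B = B η (M B)ᴴ η = A (η Aᴴ Mᴴ η)`, so `B = A u`; cancelling `A` by `L` in
`A (u η uᴴ) Aᴴ = A η Aᴴ` gives `u η uᴴ = η`. Since `η² = 1`, this makes `η uᴴ η` a right,
hence two-sided, inverse of `u`, which is `uᴴ η u = η`.
-/

open Matrix

namespace Matrix

section

variable {K : Type*} [Field K] {m n : Type*} [Fintype m] [Fintype n] [DecidableEq n]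

theorem exists_mul_eq_one_of_linearIndependent_col [DecidableEq m] {A : Matrix m n K}
    (hA : LinearIndependent K A.col) : ∃ L : Matrix n m K, L * A = 1 := by
  obtain ⟨g, hg⟩ := A.mulVecLin.exists_leftInverse_of_injective
    (LinearMap.ker_eq_bot.mpr (mulVec_injective_iff.mpr hA))
  refine ⟨LinearMap.toMatrix' g, toLin'.injective ?_⟩
  rw [toLin'_mul, toLin'_toMatrix', toLin'_one, toLin'_apply', hg]

variable [StarRing K]

theorem conjTranspose_mul_mul_eq_of_mul_mul_conjTranspose_eq {η u : Matrix n n K}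
    (hη : η * η = 1) (hu : u * η * uᴴ = η) : uᴴ * η * u = η := by
  have hright : u * (η * uᴴ * η) = 1 := by
    rw [← hη]
    simp only [← Matrix.mul_assoc, hu]
  have hleft : η * uᴴ * η * u = 1 := mul_eq_one_comm.mp hright
  calc uᴴ * η * u = η * (η * uᴴ * η * u) := by
        simp only [← Matrix.mul_assoc, hη, Matrix.one_mul]
    _ = η := by rw [hleft, Matrix.mul_one]

theorem mul_mul_conjTranspose_cancel_of_mul_eq_one {L : Matrix n m K} {A : Matrix m n K}
    (hL : L * A = 1) (X : Matrix n n K) : L * (A * X * Aᴴ) * Lᴴ = X := by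
  rw [← Matrix.mul_assoc, ← Matrix.mul_assoc, hL, Matrix.one_mul, Matrix.mul_assoc,
    ← conjTranspose_mul, hL, conjTranspose_one, Matrix.mul_one]

theorem exists_eq_mul_of_mul_mul_conjTranspose_eq [DecidableEq m] {A B : Matrix m n K}
    {η : Matrix n n K} (hB : LinearIndependent K B.col) (hη : η * η = 1)
    (h : A * η * Aᴴ = B * η * Bᴴ) : ∃ u : Matrix n n K, B = A * u := by
  obtain ⟨M, hM⟩ := exists_mul_eq_one_of_linearIndependent_col hB
  refine ⟨η * Aᴴ * Mᴴ * η, ?_⟩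
  calc B = B * η * (M * B)ᴴ * η := by
        rw [hM, conjTranspose_one, Matrix.mul_one, Matrix.mul_assoc, hη, Matrix.mul_one]
    _ = A * (η * Aᴴ * Mᴴ * η) := by
        rw [conjTranspose_mul, ← Matrix.mul_assoc, ← Matrix.mul_assoc, ← h]
        simp only [Matrix.mul_assoc]

theorem exists_conjTranspose_mul_mul_eq_and_eq_mul [DecidableEq m] {A B : Matrix m n K}
    {η : Matrix n n K} (hA : LinearIndependent K A.col) (hB : LinearIndependent K B.col)
    (hη : η * η = 1) (h : A * η * Aᴴ = B * η * Bᴴ) :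
    ∃ u : Matrix n n K, uᴴ * η * u = η ∧ B = A * u := by
  obtain ⟨u, rfl⟩ := exists_eq_mul_of_mul_mul_conjTranspose_eq hB hη h
  obtain ⟨L, hL⟩ := exists_mul_eq_one_of_linearIndependent_col hA
  refine ⟨u, conjTranspose_mul_mul_eq_of_mul_mul_conjTranspose_eq hη ?_, rfl⟩
  calc u * η * uᴴ = L * (A * u * η * (A * u)ᴴ) * Lᴴ := by
        rw [← mul_mul_conjTranspose_cancel_of_mul_eq_one hL (u * η * uᴴ), conjTranspose_mul]
        simp only [Matrix.mul_assoc]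
    _ = η := by rw [← h, mul_mul_conjTranspose_cancel_of_mul_eq_one hL]

end

section

variable {R : Type*} {ι m n : Type*}

def flatten (C : ι → Matrix m n R) : Matrix (m × n) ι R :=
  of fun p i => C i p.1 p.2

theorem flatten_injective : Function.Injective (flatten : (ι → Matrix m n R) → _) :=
  fun _ _ h => funext fun i => ext fun a b => congrFun (congrFun h (a, b)) i

theorem linearIndependent_flatten_col [Field R] {C : ι → Matrix m n R}
    (hC : LinearIndependent R C) : LinearIndependent R (flatten C).col :=
  hC.map' (LinearEquiv.curry R R m n).symm.toLinearMap (LinearEquiv.ker _)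

variable [CommSemiring R] [Fintype ι]

theorem flatten_mul {κ : Type*} (C : ι → Matrix m n R) (u : Matrix ι κ R) :
    flatten C * u = flatten fun j => ∑ i, u i j • C i := by
  ext p j
  simp only [flatten, mul_apply, of_apply, Matrix.sum_apply, Matrix.smul_apply, smul_eq_mul,
    mul_comm]

variable [StarRing R]

theorem flatten_mul_diagonal_mul_conjTranspose_apply [DecidableEq ι] (c : ι → R)
    (C : ι → Matrix m n R) (p q : m × n) :
    (flatten C * diagonal c * (flatten C)ᴴ) p q =
      ∑ i, c i * (C i p.1 p.2 * star (C i q.1 q.2)) := by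
  rw [mul_apply]
  simp only [mul_diagonal, flatten, of_apply, conjTranspose_apply]
  exact Finset.sum_congr rfl fun i _ => by ring

variable [Fintype n] [DecidableEq n]

theorem sum_smul_mul_single_mul_conjTranspose_apply (c : ι → R) (C : ι → Matrix m n R)
    (a p : m) (b q : n) :
    (∑ i, c i • (C i * single b q (1 : R) * (C i)ᴴ)) a p =
      ∑ i, c i * (C i a b * star (C i p q)) := by
  simp [Matrix.sum_apply, mul_apply, single, ite_and, Finset.sum_ite_eq]

theorem flatten_mul_diagonal_mul_conjTranspose_eq_of_sum_smul_eq [DecidableEq ι] {c : ι → R}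
    {C D : ι → Matrix m n R}
    (h : ∀ ρ : Matrix n n R, ∑ i, c i • (C i * ρ * (C i)ᴴ) = ∑ j, c j • (D j * ρ * (D j)ᴴ)) :
    flatten C * diagonal c * (flatten C)ᴴ = flatten D * diagonal c * (flatten D)ᴴ := by
  ext p q
  have h_entry := congrFun (congrFun (h (single p.2 q.2 1)) p.1) q.1
  rwa [sum_smul_mul_single_mul_conjTranspose_apply, sum_smul_mul_single_mul_conjTranspose_apply,
    ← flatten_mul_diagonal_mul_conjTranspose_apply,
    ← flatten_mul_diagonal_mul_conjTranspose_apply] at h_entry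

end

end Matrix

/-- **Pseudounitary freedom in the operator-sum representation (necessity).** If the
linearly independent families of operation elements `C` and `D` give rise to the same
Hermiticity-preserving map with the same signs,
`∑ i, η i • C i ρ (C i)ᴴ = ∑ j, η j • D j ρ (D j)ᴴ` for all `ρ`, then there is a
pseudounitary `u` (with respect to `η = diag(η₁,…,ηₙ)`) with `D j = ∑ i, u i j • C i`. -/
theorem stmt_14 {n N : ℕ} (η : Fin n → ℝ) (hη : ∀ i, η i = 1 ∨ η i = -1)
    (C D : Fin n → Matrix (Fin N) (Fin N) ℂ)
    (hC : LinearIndependent ℂ C) (hD : LinearIndependent ℂ D)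
    (heq : ∀ ρ : Matrix (Fin N) (Fin N) ℂ,
      ∑ i, (η i : ℂ) • (C i * ρ * (C i)ᴴ) = ∑ j, (η j : ℂ) • (D j * ρ * (D j)ᴴ)) :
    ∃ u : Matrix (Fin n) (Fin n) ℂ,
      uᴴ * Matrix.diagonal (fun i => (η i : ℂ)) * u =
        Matrix.diagonal (fun i => (η i : ℂ)) ∧
      ∀ j, D j = ∑ i, u i j • C i := by
  have hη_sq : diagonal (fun i => (η i : ℂ)) * diagonal (fun i => (η i : ℂ)) = 1 := by
    rw [diagonal_mul_diagonal, ← diagonal_one]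
    congr 1 with i
    rcases hη i with h | h <;> simp [h]
  obtain ⟨u, hu, hDC⟩ := exists_conjTranspose_mul_mul_eq_and_eq_mul
    (linearIndependent_flatten_col hC) (linearIndependent_flatten_col hD) hη_sq
    (flatten_mul_diagonal_mul_conjTranspose_eq_of_sum_smul_eq heq)
  rw [flatten_mul] at hDC
  exact ⟨u, hu, congrFun (flatten_injective hDC)⟩
end
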